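/- In the square annulus X, regarded as a topological subspace of ℝ², the path a going below the obstruction, a(t) = (min(2t,1), max(2t−1,0)), and the path a′ going above the obstruction, a′(t) = (max(2t−1,0), min(2t,1)), both from (0,0) to (1,1), are not homotopic with fixed endpoints in X (as ordinary paths, with no monotonicity constraint on the homotopy). (The final claim of 2.1: a path below the obstruction and a path above it are not even 2-equivalent in the underlying topological space.) -/

import Mathlib

open Set

/-- The obstruction: the open square `(1/3, 2/3) × (1/3, 2/3)`. -/
def Qobs : Set (ℝ × ℝ) := Ioo (1/3 : ℝ) (2/3) ×ˢ Ioo (1/3 : ℝ) (2/3)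

/-- The square annulus `X = [0,1]² \ Q`, as a subset of `ℝ²`. -/
def Xann : Set (ℝ × ℝ) := (Icc (0:ℝ) 1 ×ˢ Icc (0:ℝ) 1) \ Qobs

/-- The path from `(0,0)` to `(1,1)` going below the obstruction. -/
noncomputable def belowPath (t : ℝ) : ℝ × ℝ := (min (2 * t) 1, max (2 * t - 1) 0)

/-- The path from `(0,0)` to `(1,1)` going above the obstruction. -/
noncomputable def abovePath (t : ℝ) : ℝ × ℝ := (max (2 * t - 1) 0, min (2 * t) 1)

/-!
The swap `(x, y) ↦ (y, x)` preserves `X`, fixes both endpoints and exchanges the two paths. In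
the coordinate `z = (x - 1/2) + (y - 1/2) i`, which maps `X` into `ℂ \ {0}`, it is the reflection
`z ↦ i z̄`. If `Γ` lifts the lower path through `exp`, then `Γ̄ + (Γ 0 - Γ̄ 0)` lifts the upper
path from the same starting point. A homotopy rel endpoints would force both lifts to end at the
same point. Then `Im Γ` would take the same value at both ends, so `z(0,0) = -(1+i)/2` and
`z(1,1) = (1+i)/2` would lie on the same ray from `0`, which is false.
-/

open ComplexConjugate unitInterval

section

variable {E X Y : Type*} [TopologicalSpace E] [TopologicalSpace X] [TopologicalSpace Y]

def ContinuousMap.curryHomotopyRel (F : C(I × I, Y))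
    (hF : ∀ s, ∀ t ∈ ({0, 1} : Set I), F (s, t) = F (0, t)) :
    (F.curry 0).HomotopyRel (F.curry 1) {0, 1} where
  toContinuousMap := F
  map_zero_left _ := rfl
  map_one_left _ := rfl
  prop' := hF

theorem IsCoveringMap.lift_apply_one_eq_of_homotopicRel {p : E → X} (cov : IsCoveringMap p)
    {γ₀ γ₁ : C(I, X)} (h : γ₀.HomotopicRel γ₁ {0, 1}) {Γ₀ Γ₁ : C(I, E)}
    (hΓ₀ : p ∘ Γ₀ = γ₀) (hΓ₁ : p ∘ Γ₁ = γ₁) (h0 : Γ₀ 0 = Γ₁ 0) : Γ₀ 1 = Γ₁ 1 := by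
  obtain ⟨F⟩ := (cov.homotopicRel_iff_comp ⟨0, Set.mem_insert _ _, h0⟩).2
    (by convert h <;> exact DFunLike.ext' ‹_›)
  exact F.fst_eq_snd (Set.mem_insert_of_mem _ rfl)

end

namespace Complex

theorem not_homotopicRel_of_eq_mul_conj {γ₀ γ₁ : C(I, {z : ℂ // z ≠ 0})} {c : ℂ}
    (hγ : ∀ t, (γ₁ t : ℂ) = c * conj (γ₀ t : ℂ)) (hend : (γ₀ 1 : ℂ) = -γ₀ 0) :
    ¬ γ₀.HomotopicRel γ₁ {0, 1} := by
  intro h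
  obtain ⟨Γ₀, hΓ₀, -⟩ := isCoveringMap_exp.exists_path_lifts γ₀ (log (γ₀ 0))
    (Subtype.ext (exp_log (γ₀ 0).2).symm)
  have hexp (t : I) : exp (Γ₀ t) = γ₀ t := congrArg Subtype.val (congrFun hΓ₀ t)
  let Γ₁ : C(I, ℂ) := ⟨fun t ↦ conj (Γ₀ t) + (Γ₀ 0 - conj (Γ₀ 0)), by fun_prop⟩
  have hc : c = γ₀ 0 / conj (γ₀ 0 : ℂ) := by
    have h0 := congrArg Subtype.val (h.some.fst_eq_snd (x := 0) (Set.mem_insert _ _))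
    rw [hγ] at h0
    exact eq_div_of_mul_eq ((map_ne_zero _).2 (γ₀ 0).2) h0.symm
  have hΓ₁ : (fun z ↦ (⟨exp z, exp_ne_zero z⟩ : {z : ℂ // z ≠ 0})) ∘ Γ₁ = γ₁ := by
    funext t
    apply Subtype.ext
    simp only [Function.comp_apply, ContinuousMap.coe_mk, Γ₁, exp_add, exp_sub, exp_conj, hexp,
      hγ, hc]
    ring
  have h1 := isCoveringMap_exp.lift_apply_one_eq_of_homotopicRel h hΓ₀ hΓ₁ (by simp [Γ₁])
  have him : (Γ₀ 1).im = (Γ₀ 0).im := by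
    have := congrArg im h1
    simp only [Γ₁, ContinuousMap.coe_mk, add_im, conj_im, sub_im] at this
    linarith
  have hre : (Γ₀ 1).re = (Γ₀ 0).re := by
    apply Real.exp_injective
    rw [← norm_exp, ← norm_exp, hexp, hexp, hend, norm_neg]
  have hγ₀ : (γ₀ 1 : ℂ) = γ₀ 0 := by rw [← hexp, ← hexp, Complex.ext hre him]
  exact (γ₀ 0).2 (by linear_combination (hγ₀.symm.trans hend) / 2)

end Complex

noncomputable def centeredComplex (p : ℝ × ℝ) : ℂ := ⟨p.1 - 2⁻¹, p.2 - 2⁻¹⟩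

theorem continuous_centeredComplex : Continuous centeredComplex :=
  Complex.equivRealProdCLM.symm.continuous.comp
    (by fun_prop : Continuous fun p : ℝ × ℝ ↦ (p.1 - 2⁻¹, p.2 - 2⁻¹))

theorem centeredComplex_ne_zero {p : ℝ × ℝ} (hp : p ∈ Xann) : centeredComplex p ≠ 0 := by
  intro h
  simp only [centeredComplex, Complex.ext_iff, Complex.zero_re, Complex.zero_im, sub_eq_zero] at h
  exact hp.2 (by rw [Qobs, mem_prod, h.1, h.2]; norm_num)

theorem centeredComplex_swap (p : ℝ × ℝ) :
    centeredComplex p.swap = Complex.I * conj (centeredComplex p) := by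
  apply Complex.ext <;> simp [centeredComplex]

/-- In the square annulus, regarded as a topological subspace of `ℝ²`, the path below the
obstruction and the path above it are not homotopic with fixed endpoints (as ordinary
paths, with no monotonicity constraint on the homotopy). (Final claim of 2.1.) -/
theorem belowPath_not_homotopic_abovePath :
    ¬ ∃ H : ℝ → ℝ → ℝ × ℝ,
      ContinuousOn (fun p : ℝ × ℝ => H p.1 p.2) (Icc 0 1 ×ˢ Icc 0 1) ∧
      (∀ t ∈ Icc (0:ℝ) 1, ∀ s ∈ Icc (0:ℝ) 1, H t s ∈ Xann) ∧
      (∀ t ∈ Icc (0:ℝ) 1, H t 0 = belowPath t) ∧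
      (∀ t ∈ Icc (0:ℝ) 1, H t 1 = abovePath t) ∧
      (∀ s ∈ Icc (0:ℝ) 1, H 0 s = (0, 0)) ∧
      (∀ s ∈ Icc (0:ℝ) 1, H 1 s = (1, 1)) := by
  rintro ⟨H, hcont, hmem, hbot, htop, hleft, hright⟩
  let F : C(I × I, {z : ℂ // z ≠ 0}) :=
    ⟨fun q ↦ ⟨centeredComplex (H q.2 q.1), centeredComplex_ne_zero (hmem _ q.2.2 _ q.1.2)⟩,
      ((continuous_centeredComplex.comp_continuousOn hcont).comp_continuous
        (f := fun q : I × I ↦ ((q.2 : ℝ), (q.1 : ℝ))) (by fun_prop)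
        fun q ↦ ⟨q.2.2, q.1.2⟩).subtype_mk _⟩
  refine Complex.not_homotopicRel_of_eq_mul_conj (γ₀ := F.curry 0) (γ₁ := F.curry 1)
    (c := Complex.I) (fun t ↦ ?_) ?_ ⟨F.curryHomotopyRel ?_⟩
  · change centeredComplex (H t 1) = _ * conj (centeredComplex (H t 0))
    rw [htop _ t.2, hbot _ t.2, ← centeredComplex_swap]
    rfl
  · change centeredComplex (H 1 0) = -centeredComplex (H 0 0)
    rw [hleft 0 (by simp), hright 0 (by simp)]
    apply Complex.ext <;> norm_num [centeredComplex]
  · rintro s t (rfl | rfl) <;> apply Subtype.ext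
    · change centeredComplex (H 0 s) = centeredComplex (H 0 0)
      rw [hleft _ s.2, hleft 0 (by simp)]
    · change centeredComplex (H 1 s) = centeredComplex (H 1 0)
      rw [hright _ s.2, hright 0 (by simp)]
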